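/- arXiv:1505.00739 — 6 statements merged into one kernel-verified Lean document; each statement's English description precedes it below -/
import Mathlib

section
/- Let X be δ-hyperbolic, upper Gromov product bounded by above, with visual metric d_x^ε. Suppose v ∈ ∂X is a radial limit point: there are C' > 0 and γ_n ∈ Γ with γ_n x → v and d(γ_n x, x) − (γ_n x, v)_x ≤ C'. Then there is a constant C > 0 such that for all n with d(x, γ_n x) ≥ 1, d_x^ε(v, w_x^{γ_n x}) ≤ C · d(x, γ_n x)^{ε/α} · e^{−ε d(x, γ_n x)}, i.e., γ_n x lies in the weak nontangential approach domain Ω_C(v). -/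
/-!
The point `w(γ_n x)` has Gromov product at least `d(x, γ_n x) − c` with `γ_n x`, and so does `v`
up to `C'`; δ-hyperbolicity through `γ_n x` gives `(v, w(γ_n x))_x ≥ d(x, γ_n x) − const`, which
the visual metric turns into the decay `e^{−ε d(x, γ_n x)}`. The factor `d(x, γ_n x)^{ε/α} ≥ 1`
only weakens the bound.
-/

open Real

theorem le_gromovProduct_of_le_of_le {P : Type*} (gp : P → P → ℝ) {δ : ℝ}
    (hhyp : ∀ a b c' : P, gp a b ≥ min (gp a c') (gp c' b) - 2 * δ)
    {a b p : P} {t s₁ s₂ : ℝ} (h₁ : t - s₁ ≤ gp a p) (h₂ : t - s₂ ≤ gp p b) :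
    t - (max s₁ s₂ + 2 * δ) ≤ gp a b := by
  have hmin : t - max s₁ s₂ ≤ min (gp a p) (gp p b) :=
    le_min (by linarith [le_max_left s₁ s₂]) (by linarith [le_max_right s₁ s₂])
  linarith [hhyp a b p]

theorem le_mul_exp_of_visual {B : Type*} (dv gp : B → B → ℝ) {cm ε : ℝ} (hcm : 0 ≤ cm)
    (hdv0 : ∀ v, dv v v = 0) (hdv : ∀ v u, v ≠ u → dv v u ≤ cm * exp (-ε * gp v u))
    (v u : B) : dv v u ≤ cm * exp (-ε * gp v u) := by
  rcases eq_or_ne v u with rfl | hne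
  · rw [hdv0]
    positivity
  · exact hdv v u hne

theorem exp_neg_mul_le_of_sub_le {ε g t K : ℝ} (hε : 0 ≤ ε) (h : t - K ≤ g) :
    exp (-ε * g) ≤ exp (ε * K) * exp (-ε * t) := by
  rw [← exp_add]
  exact exp_le_exp.2 (by nlinarith)

theorem stmt4_general {X B : Type*} [MetricSpace X] (δ c ε cm α : ℝ)
    (hε : 0 < ε) (hcm : 0 < cm) (hα : 0 < α)
    (x : X)
    -- extended Gromov product on `X ∪ ∂X` with basepoint `x`
    (gp : (X ⊕ B) → (X ⊕ B) → ℝ)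
    (hsym : ∀ a b : X ⊕ B, gp a b = gp b a)
    (hhyp : ∀ a b c' : X ⊕ B, gp a b ≥ min (gp a c') (gp c' b) - 2 * δ)
    -- upper Gromov product bounded by above, witnessed by `w`
    (w : X → B)
    (hw : ∀ y : X, gp (Sum.inl y) (Sum.inr (w y)) ≥ dist x y - c)
    -- visual metric of parameter ε on the boundary
    (dv : B → B → ℝ)
    (hdv0 : ∀ v : B, dv v v = 0)
    (hdv : ∀ v u : B, v ≠ u →
      cm⁻¹ * exp (-ε * gp (Sum.inr v) (Sum.inr u)) ≤ dv v u ∧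
      dv v u ≤ cm * exp (-ε * gp (Sum.inr v) (Sum.inr u)))
    -- `v` is a radial limit point: the orbit points `z n = γ_n x` satisfy
    -- `d(x, z n) − (z n, v)_x ≤ C'`
    (v : B) (C' : ℝ) (z : ℕ → X)
    (hz : ∀ n, dist x (z n) - gp (Sum.inl (z n)) (Sum.inr v) ≤ C') :
    ∃ C > 0, ∀ n, 1 ≤ dist x (z n) →
      dv v (w (z n)) ≤ C * dist x (z n) ^ (ε / α) * exp (-ε * dist x (z n)) := by
  set K := max C' c + 2 * δ
  refine ⟨cm * exp (ε * K), by positivity, fun n hn => ?_⟩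
  set d := dist x (z n)
  have hv : d - C' ≤ gp (Sum.inr v) (Sum.inl (z n)) := by
    rw [hsym]
    linarith [hz n]
  have hvw : d - K ≤ gp (Sum.inr v) (Sum.inr (w (z n))) :=
    le_gromovProduct_of_le_of_le gp hhyp hv (hw (z n))
  have hpow : 1 ≤ d ^ (ε / α) := one_le_rpow hn (by positivity)
  calc dv v (w (z n))
      ≤ cm * exp (-ε * gp (Sum.inr v) (Sum.inr (w (z n)))) :=
        le_mul_exp_of_visual dv (fun v u => gp (Sum.inr v) (Sum.inr u)) hcm.le hdv0
          (fun v u h => (hdv v u h).2) v (w (z n))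
    _ ≤ cm * (exp (ε * K) * exp (-ε * d)) := by
        gcongr
        exact exp_neg_mul_le_of_sub_le hε.le hvw
    _ ≤ cm * exp (ε * K) * d ^ (ε / α) * exp (-ε * d) := by
        rw [mul_right_comm _ (d ^ (ε / α)), ← mul_assoc]
        exact le_mul_of_one_le_right (by positivity) hpow

/-- a radial limit point is approached inside a weak nontangential
approach domain: if `d(γ_n x, x) − (γ_n x, v)_x ≤ C'` then there is `C > 0` with
`d_x^ε(v, w_x^{γ_n x}) ≤ C · d(x, γ_n x)^{ε/α} · e^{−ε d(x, γ_n x)}`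
whenever `d(x, γ_n x) ≥ 1`. -/
theorem stmt4 {X B : Type*} [MetricSpace X] (δ c ε cm α : ℝ)
    (hδ : 0 ≤ δ) (hc : 0 < c) (hε : 0 < ε) (hcm : 0 < cm) (hα : 0 < α)
    (x : X)
    -- extended Gromov product on `X ∪ ∂X` with basepoint `x`
    (gp : (X ⊕ B) → (X ⊕ B) → ℝ)
    (hint : ∀ (y z : X),
      gp (Sum.inl y) (Sum.inl z) = (dist x y + dist x z - dist y z) / 2)
    (hsym : ∀ a b : X ⊕ B, gp a b = gp b a)
    (hhyp : ∀ a b c' : X ⊕ B, gp a b ≥ min (gp a c') (gp c' b) - 2 * δ)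
    -- upper Gromov product bounded by above, witnessed by `w`
    (w : X → B)
    (hw : ∀ y : X, gp (Sum.inl y) (Sum.inr (w y)) ≥ dist x y - c)
    -- visual metric of parameter ε on the boundary
    (dv : B → B → ℝ)
    (hdv0 : ∀ v : B, dv v v = 0)
    (hdv : ∀ v u : B, v ≠ u →
      cm⁻¹ * exp (-ε * gp (Sum.inr v) (Sum.inr u)) ≤ dv v u ∧
      dv v u ≤ cm * exp (-ε * gp (Sum.inr v) (Sum.inr u)))
    -- `v` is a radial limit point: the orbit points `z n = γ_n x` satisfy
    -- `d(x, z n) − (z n, v)_x ≤ C'`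
    (v : B) (C' : ℝ) (hC' : 0 < C') (z : ℕ → X)
    (hz : ∀ n, dist x (z n) - gp (Sum.inl (z n)) (Sum.inr v) ≤ C') :
    ∃ C > 0, ∀ n, 1 ≤ dist x (z n) →
      dv v (w (z n)) ≤ C * dist x (z n) ^ (ε / α) * exp (-ε * dist x (z n)) :=
  stmt4_general δ c ε cm α hε hcm hα x gp hsym hhyp w hw dv hdv0 hdv v C' z hz
end

section
/- Let (Λ, d, ν) be a compact metric measure space with ν a finite positive Borel measure, and let Y be a topological space with Λ embedded as a subspace of a compactification Ȳ of an open set Y (so Ȳ = Y ∪ Λ). Suppose K : Y × Λ → ℝ is a continuous Dirac–Weierstrass family: K ≥ 0, ∫_Λ K(y,v) dν(v) = 1 for all y ∈ Y, and for every v₀ ∈ Λ and r > 0, ∫_{Λ \ B(v₀,r)} K(y,v) dν(v) → 0 as y → v₀. Then for every continuous f : Λ → ℂ, the function on Ȳ equal to ∫_Λ f(v) K(y,v) dν(v) for y ∈ Y and to f(y) for y ∈ Λ is continuous on Ȳ. -/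
/-!
Inside `Y` the extension is the integral of a kernel that is jointly continuous on `Y × Λ` with
`Λ` compact, so it is continuous there. At a boundary point `e v₀` the family `K y` is an
approximate identity: since `∫ K y = 1`, the difference `h y - f v₀` is `∫ K y v (f v - f v₀)`,
which is small on a ball around `v₀` by continuity of `f` and small off that ball because the
mass of `K y` there tends to `0`, while `f` is bounded. Along the boundary itself `h` is `f`,
which is continuous because `e` is an embedding.
-/

open MeasureTheory Metric Filter Topology

theorem ContinuousMap.continuous_integral {α E : Type*} [TopologicalSpace α] [CompactSpace α]
    [MeasurableSpace α] [BorelSpace α] [NormedAddCommGroup E] [NormedSpace ℝ E]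
    [SecondCountableTopologyEither α E] (μ : Measure α) [IsFiniteMeasure μ] :
    Continuous fun g : C(α, E) => ∫ a, g a ∂μ :=
  (MeasureTheory.continuous_integral.comp (toLp (E := E) 1 μ ℝ).continuous).congr fun g =>
    integral_congr_ae (coeFn_toLp μ g)

theorem ContinuousOn.integral_of_compactSpace {X Λ E : Type*} [TopologicalSpace X]
    [TopologicalSpace Λ] [CompactSpace Λ] [MeasurableSpace Λ] [BorelSpace Λ]
    [NormedAddCommGroup E] [NormedSpace ℝ E] [SecondCountableTopologyEither Λ E]
    (ν : Measure Λ) [IsFiniteMeasure ν] {F : X → Λ → E} {s : Set X}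
    (hF : ContinuousOn (fun p : X × Λ => F p.1 p.2) (s ×ˢ Set.univ)) :
    ContinuousOn (fun x => ∫ v, F x v ∂ν) s := by
  rw [continuousOn_iff_continuous_domRestrict]
  let G : C(s × Λ, E) := ⟨fun p => F p.1 p.2, hF.comp_continuous
    (continuous_subtype_val.prodMap continuous_id) fun p => ⟨p.1.2, trivial⟩⟩
  exact (ContinuousMap.continuous_integral ν).comp G.curry.continuous

section ApproximateIdentity

variable {Λ E : Type*} [PseudoMetricSpace Λ] [MeasurableSpace Λ] [OpensMeasurableSpace Λ]
  {ν : Measure Λ} [NormedAddCommGroup E] [NormedSpace ℝ E] [CompleteSpace E]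

theorem norm_integral_smul_sub_le {K : Λ → ℝ} (hK0 : ∀ v, 0 ≤ K v) (hKint : Integrable K ν)
    (hK1 : ∫ v, K v ∂ν = 1) {f : Λ → E} (hfm : AEStronglyMeasurable f ν) {M : ℝ}
    (hM : ∀ v, ‖f v‖ ≤ M) {v₀ : Λ} {r δ : ℝ} (hδ : 0 ≤ δ)
    (hfδ : ∀ v ∈ ball v₀ r, ‖f v - f v₀‖ ≤ δ) :
    ‖∫ v, K v • f v ∂ν - f v₀‖ ≤ δ + 2 * M * ∫ v in (ball v₀ r)ᶜ, K v ∂ν := by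
  set g : Λ → ℝ := fun v => K v * ‖f v - f v₀‖
  have hKf_int : Integrable (fun v => K v • f v) ν := hKint.smul_bdd M hfm (.of_forall hM)
  have hdev_int : Integrable (fun v => K v • (f v - f v₀)) ν := by
    simp only [smul_sub]
    exact hKf_int.sub (hKint.smul_const (f v₀))
  have hg_int : Integrable g ν := by
    simpa only [g, norm_smul, Real.norm_of_nonneg (hK0 _)] using hdev_int.norm
  have hdev : ∫ v, K v • f v ∂ν - f v₀ = ∫ v, K v • (f v - f v₀) ∂ν := by
    simp only [smul_sub]
    rw [integral_sub hKf_int (hKint.smul_const _), integral_smul_const, hK1, one_smul]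
  have hnear : ∫ v in ball v₀ r, g v ∂ν ≤ δ := calc
    ∫ v in ball v₀ r, g v ∂ν ≤ ∫ v in ball v₀ r, δ * K v ∂ν :=
      setIntegral_mono_on hg_int.integrableOn (hKint.const_mul δ).integrableOn
        measurableSet_ball fun v hv => by
          simpa only [g, mul_comm δ] using mul_le_mul_of_nonneg_left (hfδ v hv) (hK0 v)
    _ = δ * ∫ v in ball v₀ r, K v ∂ν := integral_const_mul _ _
    _ ≤ δ * ∫ v, K v ∂ν :=
      mul_le_mul_of_nonneg_left (setIntegral_le_integral hKint (.of_forall hK0)) hδ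
    _ = δ := by rw [hK1, mul_one]
  have hfar : ∫ v in (ball v₀ r)ᶜ, g v ∂ν ≤ 2 * M * ∫ v in (ball v₀ r)ᶜ, K v ∂ν := calc
    ∫ v in (ball v₀ r)ᶜ, g v ∂ν ≤ ∫ v in (ball v₀ r)ᶜ, 2 * M * K v ∂ν :=
      setIntegral_mono_on hg_int.integrableOn (hKint.const_mul _).integrableOn
        measurableSet_ball.compl fun v _ => by
          rw [mul_comm (2 * M)]
          exact mul_le_mul_of_nonneg_left
            ((norm_sub_le _ _).trans (by linarith [hM v, hM v₀])) (hK0 v)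
    _ = 2 * M * ∫ v in (ball v₀ r)ᶜ, K v ∂ν := integral_const_mul _ _
  calc ‖∫ v, K v • f v ∂ν - f v₀‖ ≤ ∫ v, g v ∂ν := by
        rw [hdev]
        refine (norm_integral_le_integral_norm _).trans_eq ?_
        simp only [g, norm_smul, Real.norm_of_nonneg (hK0 _)]
    _ = ∫ v in ball v₀ r, g v ∂ν + ∫ v in (ball v₀ r)ᶜ, g v ∂ν :=
        (integral_add_compl measurableSet_ball hg_int).symm
    _ ≤ δ + 2 * M * ∫ v in (ball v₀ r)ᶜ, K v ∂ν := add_le_add hnear hfar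

theorem tendsto_integral_smul_of_concentrating {ι : Type*} {l : Filter ι} {K : ι → Λ → ℝ}
    (hK0 : ∀ᶠ i in l, ∀ v, 0 ≤ K i v) (hKint : ∀ᶠ i in l, Integrable (K i) ν)
    (hK1 : ∀ᶠ i in l, ∫ v, K i v ∂ν = 1) {v₀ : Λ}
    (hconc : ∀ r, 0 < r → Tendsto (fun i => ∫ v in (ball v₀ r)ᶜ, K i v ∂ν) l (𝓝 0))
    {f : Λ → E} (hfm : AEStronglyMeasurable f ν) {M : ℝ} (hM : ∀ v, ‖f v‖ ≤ M)
    (hf : ContinuousAt f v₀) :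
    Tendsto (fun i => ∫ v, K i v • f v ∂ν) l (𝓝 (f v₀)) := by
  rw [Metric.tendsto_nhds]
  intro ε hε
  obtain ⟨r, hr, hfr⟩ := Metric.continuousAt_iff.1 hf (ε / 2) (half_pos hε)
  have hbound : Tendsto (fun i => ε / 2 + 2 * M * ∫ v in (ball v₀ r)ᶜ, K i v ∂ν) l
      (𝓝 (ε / 2)) := by
    simpa using tendsto_const_nhds.add ((hconc r hr).const_mul (2 * M))
  filter_upwards [hK0, hKint, hK1, hbound.eventually (gt_mem_nhds (half_lt_self hε))]
    with i hK0i hKinti hK1i hlt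
  rw [dist_eq_norm]
  refine (norm_integral_smul_sub_le hK0i hKinti hK1i hfm hM (half_pos hε).le ?_).trans_lt hlt
  exact fun v hv => (dist_eq_norm (f v) (f v₀) ▸ hfr hv).le

end ApproximateIdentity

theorem stmt7_general {Λ W : Type*} [MetricSpace Λ] [CompactSpace Λ]
    [MeasurableSpace Λ] [BorelSpace Λ]
    (ν : Measure Λ) [IsFiniteMeasure ν]
    [TopologicalSpace W]
    (e : Λ → W) (he : Topology.IsEmbedding e) (hclosed : IsClosed (Set.range e))
    -- Dirac–Weierstrass family `K` on `Y × Λ`, `Y := (range e)ᶜ`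
    (K : W → Λ → ℝ)
    (hKcont : ContinuousOn (fun p : W × Λ => K p.1 p.2)
      ((Set.range e)ᶜ ×ˢ (Set.univ : Set Λ)))
    (hKpos : ∀ y ∉ Set.range e, ∀ v : Λ, 0 ≤ K y v)
    (hKnorm : ∀ y ∉ Set.range e, ∫ v, K y v ∂ν = 1)
    (hKconc : ∀ (v₀ : Λ) (r : ℝ), 0 < r →
      Tendsto (fun y => ∫ v in (ball v₀ r)ᶜ, K y v ∂ν)
        (𝓝[(Set.range e)ᶜ] (e v₀)) (𝓝 0))
    -- a continuous function on the boundary and its extension `h`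
    (f : Λ → ℂ) (hf : Continuous f)
    (h : W → ℂ)
    (hY : ∀ y ∉ Set.range e, h y = ∫ v, f v * (K y v : ℂ) ∂ν)
    (hΛ : ∀ l : Λ, h (e l) = f l) :
    Continuous h := by
  have hY_smul : ∀ y ∉ Set.range e, h y = ∫ v, K y v • f v ∂ν := fun y hy => by
    simp only [hY y hy, Complex.real_smul, mul_comm]
  have hKint : ∀ y ∉ Set.range e, Integrable (K y) ν := fun y hy =>
    (hKcont.comp_continuous (.prodMk_right y) fun _ => ⟨hy, trivial⟩)
      |>.integrable_of_hasCompactSupport (.of_compactSpace _)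
  have hinterior : ContinuousOn h (Set.range e)ᶜ :=
    (ContinuousOn.integral_of_compactSpace ν
      (hKcont.smul (hf.comp continuous_snd).continuousOn)).congr hY_smul
  obtain ⟨M, hM⟩ := (isCompact_range hf).isBounded.exists_norm_le
  refine continuous_iff_continuousAt.2 fun x => ?_
  by_cases hx : x ∈ Set.range e
  · obtain ⟨v₀, rfl⟩ := hx
    have hfromY : ContinuousWithinAt h (Set.range e)ᶜ (e v₀) := by
      rw [ContinuousWithinAt, hΛ]
      exact (tendsto_integral_smul_of_concentrating (eventually_nhdsWithin_of_forall hKpos)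
        (eventually_nhdsWithin_of_forall hKint) (eventually_nhdsWithin_of_forall hKnorm)
        (hKconc v₀) hf.aestronglyMeasurable (fun v => hM _ ⟨v, rfl⟩) hf.continuousAt).congr'
        (eventually_nhdsWithin_of_forall fun y hy => (hY_smul y hy).symm)
    have hfromΛ : ContinuousWithinAt h (Set.range e) (e v₀) := by
      rw [ContinuousWithinAt, ← he.map_nhds_eq, tendsto_map'_iff, hΛ, (funext hΛ : h ∘ e = f)]
      exact hf.continuousAt
    rw [← continuousWithinAt_univ, ← Set.compl_union_self (Set.range e)]
    exact hfromY.union hfromΛ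
  · exact hinterior.continuousAt (hclosed.isOpen_compl.mem_nhds hx)

/-- a Dirac–Weierstrass family extends continuous boundary functions
continuously to the compactification `Ȳ = Y ∪ Λ`: here `W` is the compactification,
`Λ` embeds in `W` as the closed boundary via `e`, and `Y = W \ e(Λ)` is the open part. -/
theorem stmt7 {Λ W : Type*} [MetricSpace Λ] [CompactSpace Λ]
    [MeasurableSpace Λ] [BorelSpace Λ]
    (ν : Measure Λ) [IsFiniteMeasure ν]
    [TopologicalSpace W] [CompactSpace W]
    (e : Λ → W) (he : Topology.IsEmbedding e) (hclosed : IsClosed (Set.range e))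
    -- Dirac–Weierstrass family `K` on `Y × Λ`, `Y := (range e)ᶜ`
    (K : W → Λ → ℝ)
    (hKcont : ContinuousOn (fun p : W × Λ => K p.1 p.2)
      ((Set.range e)ᶜ ×ˢ (Set.univ : Set Λ)))
    (hKpos : ∀ y ∉ Set.range e, ∀ v : Λ, 0 ≤ K y v)
    (hKnorm : ∀ y ∉ Set.range e, ∫ v, K y v ∂ν = 1)
    (hKconc : ∀ (v₀ : Λ) (r : ℝ), 0 < r →
      Tendsto (fun y => ∫ v in (ball v₀ r)ᶜ, K y v ∂ν)
        (𝓝[(Set.range e)ᶜ] (e v₀)) (𝓝 0))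
    -- a continuous function on the boundary and its extension `h`
    (f : Λ → ℂ) (hf : Continuous f)
    (h : W → ℂ)
    (hY : ∀ y ∉ Set.range e, h y = ∫ v, f v * (K y v : ℂ) ∂ν)
    (hΛ : ∀ l : Λ, h (e l) = f l) :
    Continuous h :=
  stmt7_general ν e he hclosed K hKcont hKpos hKnorm hKconc f hf h hY hΛ
end

section
/- Polynomial bound on sums of squared matrix coefficients: Let Γ be a group with length function |·|, π a unitary representation of Γ on a Hilbert space H, 1 ∈ H a fixed unit vector with φ(γ) = ⟨π(γ)1, 1⟩ > 0. Assume: (a) there exist constants and a degree-one polynomial Q₂ with φ(γ) ≤ Q₂(n) e^{−αn/2} for γ with |γ| near n (n large); (b) the Cauchy–Schwarz bound ⟨π(γ)1, ξ⟩² ≤ φ(γ) ⟨π(γ)1, ξ²⟩-type bound holds in the form ⟨π(γ)1, ξ⟩²/φ(γ)² ≤ (P₀ξ²)(γx); (c) e^{−αk} ≤ C'/|C_{k,ρ}| for the annuli C_{k,ρ}; and (d) the uniform bound (1/|C_{k,ρ}|)|Σ_{γ∈C_{k,ρ}} P₀(f)(γx)| ≤ M‖f‖₁. Then there is a polynomial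 Q of degree 3 such that for every unit vector ξ and all n: Σ_{|γ| ≤ n} |⟨π(γ)1, ξ⟩|² ≤ Q(n). -/
open Finset

/-!
Sort each `γ` of the ball of radius `n` into the annulus `C_k` with `k = ⌈|γ|⌉`, so that the sum
splits into `n + 1` annulus sums. The finitely many annuli with `k < N₀` contribute at most their
cardinality, since every squared coefficient is at most `1`. On an annulus with `k ≥ N₀`, (b) gives
`⟨π(γ)1, ξ⟩² ≤ φ(γ)² T(γ, ξ) ≤ (ak + b)² e^{-αk} T(γ, ξ)` by (a); summing and using (d) and then (c)
bounds the annulus sum by `C' M (ak + b)²`. Hence each of the `n + 1` annulus sums is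
`O(n²)`, and the total is a cubic polynomial in `n`.
-/

theorem Finset.sum_le_sum_sum_of_cover {ι α M : Type*} [AddCommMonoid M] [PartialOrder M]
    [IsOrderedAddMonoid M] {s : Finset α} {t : Finset ι} {u : ι → Finset α} {f : α → M}
    (g : α → ι) (hf : ∀ x, 0 ≤ f x) (hg : ∀ x ∈ s, g x ∈ t ∧ x ∈ u (g x)) :
    ∑ x ∈ s, f x ≤ ∑ i ∈ t, ∑ x ∈ u i, f x := by
  classical
  rw [← sum_fiberwise_of_maps_to fun x hx => (hg x hx).1]
  refine sum_le_sum fun i _ => sum_le_sum_of_subset_of_nonneg (fun x hx => ?_) fun x _ _ => hf x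
  obtain ⟨hxs, rfl⟩ := mem_filter.1 hx
  exact (hg x hxs).2

theorem Nat.ceil_sub_le_and_le_ceil_add {x ρ : ℝ} (hx : 0 ≤ x) (hρ : 1 ≤ ρ) :
    (⌈x⌉₊ : ℝ) - ρ ≤ x ∧ x ≤ ⌈x⌉₊ + ρ := by
  have := Nat.ceil_lt_add_one hx
  have := Nat.le_ceil x
  constructor <;> linarith

theorem real_inner_sq_le_one {E : Type*} [NormedAddCommGroup E] [InnerProductSpace ℝ E] {x y : E}
    (hx : ‖x‖ = 1) (hy : ‖y‖ = 1) : inner ℝ x y ^ 2 ≤ 1 := by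
  rw [sq_le_one_iff_abs_le_one]
  simpa [hx, hy] using abs_real_inner_le_norm x y

theorem Finset.sum_le_mul_card_of_inv_card_mul_sum_le {ι : Type*} {s : Finset ι} {f : ι → ℝ}
    {M : ℝ} (h : (#s : ℝ)⁻¹ * ∑ i ∈ s, f i ≤ M) : ∑ i ∈ s, f i ≤ M * #s := by
  rcases s.eq_empty_or_nonempty with rfl | hs
  · simp
  · rwa [inv_mul_le_iff₀ (by simpa using hs.card_pos), mul_comm] at h

theorem Finset.sum_le_sq_mul_sum_of_div_sq_le {ι : Type*} {s : Finset ι} {f φ T : ι → ℝ} {c : ℝ}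
    (hf : ∀ i ∈ s, 0 ≤ f i) (hφ : ∀ i ∈ s, 0 < φ i) (hφc : ∀ i ∈ s, φ i ≤ c)
    (hT : ∀ i ∈ s, f i / φ i ^ 2 ≤ T i) :
    ∑ i ∈ s, f i ≤ c ^ 2 * ∑ i ∈ s, T i := by
  rw [mul_sum]
  refine sum_le_sum fun i hi => ?_
  have hTi : 0 ≤ T i := (div_nonneg (hf i hi) (sq_nonneg _)).trans (hT i hi)
  calc f i ≤ T i * φ i ^ 2 := (div_le_iff₀ (pow_pos (hφ i hi) 2)).1 (hT i hi)
    _ ≤ T i * c ^ 2 := by gcongr; exacts [(hφ i hi).le, hφc i hi]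
    _ = c ^ 2 * T i := mul_comm _ _

theorem Finset.sum_le_of_harishChandra_bound {ι : Type*} {s : Finset ι} {f φ T : ι → ℝ}
    {p y C' M : ℝ} (hf : ∀ i ∈ s, 0 ≤ f i) (hφ : ∀ i ∈ s, 0 < φ i)
    (hφle : ∀ i ∈ s, φ i ≤ p * Real.exp (y / 2)) (hT : ∀ i ∈ s, f i / φ i ^ 2 ≤ T i)
    (hC' : 0 < C') (hcard : Real.exp y ≤ C' / #s) (hM : 0 ≤ M)
    (hTavg : (#s : ℝ)⁻¹ * ∑ i ∈ s, T i ≤ M) :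
    ∑ i ∈ s, f i ≤ C' * M * p ^ 2 := by
  have hs : (0 : ℝ) < #s := (div_pos_iff_of_pos_left hC').1 ((Real.exp_pos y).trans_le hcard)
  have hsq : (p * Real.exp (y / 2)) ^ 2 = p ^ 2 * Real.exp y := by
    rw [mul_pow, ← Real.exp_nat_mul]; ring_nf
  calc ∑ i ∈ s, f i ≤ (p * Real.exp (y / 2)) ^ 2 * ∑ i ∈ s, T i :=
        sum_le_sq_mul_sum_of_div_sq_le hf hφ hφle hT
    _ ≤ p ^ 2 * Real.exp y * (M * #s) := by
        rw [hsq]; gcongr; exact sum_le_mul_card_of_inv_card_mul_sum_le hTavg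
    _ = p ^ 2 * M * (Real.exp y * #s) := by ring
    _ ≤ p ^ 2 * M * C' := by gcongr; exact (le_div_iff₀ hs).1 hcard
    _ = C' * M * p ^ 2 := by ring

theorem stmt15_general {G H : Type*} [Group G]
    [NormedAddCommGroup H] [InnerProductSpace ℝ H]
    -- unitary representation and distinguished unit vector
    (π : G →* (H ≃ₗᵢ[ℝ] H)) (one : H) (hone : ‖one‖ = 1)
    -- length function `|γ| = d(x, γx)`
    (ℓ : G → ℝ) (hℓ : ∀ γ, 0 ≤ ℓ γ)
    -- Harish-Chandra function, positive
    (φ : G → ℝ) (hφpos : ∀ γ, 0 < φ γ)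
    (α ρ C' M : ℝ) (hρ : 1 ≤ ρ) (hC' : 0 < C') (hM : 0 < M)
    -- balls and annuli of `Γ` are finite
    (Γn : ℕ → Finset G) (hΓn : ∀ (n : ℕ) (γ : G), γ ∈ Γn n ↔ ℓ γ ≤ n)
    (Ck : ℕ → Finset G)
    (hCk : ∀ (k : ℕ) (γ : G), γ ∈ Ck k ↔ (k : ℝ) - ρ ≤ ℓ γ ∧ ℓ γ ≤ (k : ℝ) + ρ)
    (N₀ : ℕ)
    -- (a) upper Harish-Chandra estimate on annuli, degree-one polynomial `a·n+b`
    (a b : ℝ) (ha : 0 < a) (hb : 0 < b)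
    (hHC : ∀ n : ℕ, N₀ ≤ n → ∀ γ ∈ Ck n,
      φ γ ≤ (a * n + b) * Real.exp (-α * n / 2))
    -- (b) Cauchy–Schwarz bound via the normalized Poisson transform along the orbit
    (T : G → H → ℝ)
    (hT : ∀ (γ : G) (ξ : H),
      (inner ℝ (π γ one) ξ : ℝ) ^ 2 / (φ γ) ^ 2 ≤ T γ ξ)
    -- (c) comparison of `e^{−αk}` with the cardinality of the annuli
    (hcard : ∀ k : ℕ, N₀ ≤ k →
      Real.exp (-α * k) ≤ C' / ((Ck k).card : ℝ))
    -- (d) uniform averaged bound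
    (hunif : ∀ (k : ℕ), N₀ ≤ k → ∀ ξ : H,
      ((Ck k).card : ℝ)⁻¹ * ∑ γ ∈ Ck k, T γ ξ ≤ M * ‖ξ‖ ^ 2) :
    ∃ q₃ q₂ q₁ q₀ : ℝ, ∀ ξ : H, ‖ξ‖ = 1 → ∀ n : ℕ,
      ∑ γ ∈ Γn n, (inner ℝ (π γ one) ξ : ℝ) ^ 2
        ≤ q₃ * n ^ 3 + q₂ * n ^ 2 + q₁ * n + q₀ := by
  set D : ℝ := ∑ k ∈ range N₀, (#(Ck k) : ℝ)
  have hD : 0 ≤ D := sum_nonneg fun _ _ => Nat.cast_nonneg _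
  refine ⟨C' * M * a ^ 2, C' * M * (a ^ 2 + 2 * a * b), C' * M * (2 * a * b + b ^ 2) + D,
    C' * M * b ^ 2 + D, fun ξ hξ n => ?_⟩
  have hcoef : ∀ γ, inner ℝ (π γ one) ξ ^ 2 ≤ 1 := fun γ =>
    real_inner_sq_le_one (((π γ).norm_map one).trans hone) hξ
  have hannulus : ∀ k ≤ n,
      ∑ γ ∈ Ck k, inner ℝ (π γ one) ξ ^ 2 ≤ D + C' * M * (a * n + b) ^ 2 := by
    intro k hkn
    rcases lt_or_ge k N₀ with hk | hk
    · calc ∑ γ ∈ Ck k, inner ℝ (π γ one) ξ ^ 2 ≤ #(Ck k) := by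
            simpa using sum_le_card_nsmul _ _ 1 fun γ _ => hcoef γ
        _ ≤ D := single_le_sum (f := fun k => (#(Ck k) : ℝ)) (fun _ _ => Nat.cast_nonneg _)
            (mem_range.2 hk)
        _ ≤ _ := le_add_of_nonneg_right (by positivity)
    · have hTavg := hunif k hk ξ
      rw [hξ, one_pow, mul_one] at hTavg
      calc ∑ γ ∈ Ck k, inner ℝ (π γ one) ξ ^ 2 ≤ C' * M * (a * k + b) ^ 2 :=
            sum_le_of_harishChandra_bound (fun _ _ => sq_nonneg _) (fun γ _ => hφpos γ)
              (hHC k hk) (fun γ _ => hT γ ξ) hC' (hcard k hk) hM.le hTavg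
        _ ≤ C' * M * (a * n + b) ^ 2 := by gcongr
        _ ≤ _ := le_add_of_nonneg_left hD
  calc ∑ γ ∈ Γn n, inner ℝ (π γ one) ξ ^ 2
      ≤ ∑ k ∈ range (n + 1), ∑ γ ∈ Ck k, inner ℝ (π γ one) ξ ^ 2 := by
        refine sum_le_sum_sum_of_cover (fun γ => ⌈ℓ γ⌉₊) (fun _ => sq_nonneg _) fun γ hγ => ?_
        have hγn := (hΓn n γ).1 hγ
        exact ⟨mem_range.2 (Nat.lt_succ_of_le (Nat.ceil_le.2 hγn)),
          (hCk _ γ).2 (Nat.ceil_sub_le_and_le_ceil_add (hℓ γ) hρ)⟩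
    _ ≤ ∑ k ∈ range (n + 1), (D + C' * M * (a * n + b) ^ 2) :=
        sum_le_sum fun k hk => hannulus k (Nat.lt_succ_iff.1 (mem_range.1 hk))
    _ = _ := by simp only [sum_const, card_range, nsmul_eq_mul]; push_cast; ring

/-- polynomial bound on sums of squared matrix coefficients:
under (a) the upper Harish-Chandra estimate on annuli, (b) the Cauchy–Schwarz
bound via the normalized Poisson transform `T γ ξ = (P₀ξ²)(γx)`, (c) the
comparison `e^{−αk} ≤ C'/|C_{k,ρ}|`, and (d) the uniform averaged bound, there is
a polynomial `Q` of degree 3 with `Σ_{|γ|≤n} ⟨π(γ)1, ξ⟩² ≤ Q(n)` for every unit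
vector `ξ`. -/
theorem stmt15 {G H : Type*} [Group G]
    [NormedAddCommGroup H] [InnerProductSpace ℝ H]
    -- unitary representation and distinguished unit vector
    (π : G →* (H ≃ₗᵢ[ℝ] H)) (one : H) (hone : ‖one‖ = 1)
    -- length function `|γ| = d(x, γx)`
    (ℓ : G → ℝ) (hℓ : ∀ γ, 0 ≤ ℓ γ)
    -- Harish-Chandra function, positive
    (φ : G → ℝ) (hφdef : ∀ γ, φ γ = inner ℝ (π γ one) one) (hφpos : ∀ γ, 0 < φ γ)
    (α ρ C' M : ℝ) (hα : 0 < α) (hρ : 1 ≤ ρ) (hC' : 0 < C') (hM : 0 < M)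
    -- balls and annuli of `Γ` are finite
    (Γn : ℕ → Finset G) (hΓn : ∀ (n : ℕ) (γ : G), γ ∈ Γn n ↔ ℓ γ ≤ n)
    (Ck : ℕ → Finset G)
    (hCk : ∀ (k : ℕ) (γ : G), γ ∈ Ck k ↔ (k : ℝ) - ρ ≤ ℓ γ ∧ ℓ γ ≤ (k : ℝ) + ρ)
    (N₀ : ℕ)
    -- (a) upper Harish-Chandra estimate on annuli, degree-one polynomial `a·n+b`
    (a b : ℝ) (ha : 0 < a) (hb : 0 < b)
    (hHC : ∀ n : ℕ, N₀ ≤ n → ∀ γ ∈ Ck n,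
      φ γ ≤ (a * n + b) * Real.exp (-α * n / 2))
    -- (b) Cauchy–Schwarz bound via the normalized Poisson transform along the orbit
    (T : G → H → ℝ)
    (hT : ∀ (γ : G) (ξ : H),
      (inner ℝ (π γ one) ξ : ℝ) ^ 2 / (φ γ) ^ 2 ≤ T γ ξ)
    -- (c) comparison of `e^{−αk}` with the cardinality of the annuli
    (hcard : ∀ k : ℕ, N₀ ≤ k →
      Real.exp (-α * k) ≤ C' / ((Ck k).card : ℝ))
    -- (d) uniform averaged bound
    (hunif : ∀ (k : ℕ), N₀ ≤ k → ∀ ξ : H,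
      ((Ck k).card : ℝ)⁻¹ * ∑ γ ∈ Ck k, T γ ξ ≤ M * ‖ξ‖ ^ 2) :
    ∃ q₃ q₂ q₁ q₀ : ℝ, ∀ ξ : H, ‖ξ‖ = 1 → ∀ n : ℕ,
      ∑ γ ∈ Γn n, (inner ℝ (π γ one) ξ : ℝ) ^ 2
        ≤ q₃ * n ^ 3 + q₂ * n ^ 2 + q₁ * n + q₀ :=
  stmt15_general π one hone ℓ hℓ φ hφpos α ρ C' M hρ hC' hM Γn hΓn Ck hCk N₀ a b ha hb hHC T hT
    hcard hunif
end

section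
/- Key convolution estimate for the Harish-Chandra function: Let Γ be a discrete group with length function |·| and a function φ : Γ → (0,1] with φ(e)=1, φ(γ^{-1})=φ(γ). Assume: (i) for some ρ > 1 and polynomial Q, φ(γ) ≤ Q(n)/|C_{n,ρ}| for γ ∈ C_{n,ρ} and n large; (ii) the uniform averaged bound: there is M with (1/|C_{n,ρ}|) Σ_{γ ∈ C_{n,ρ}} φ(gγ^{-1})/φ(γ) ≤ M φ(g) for all g ∈ Γ and n large. Then there exists t₀ > 0 such that for all t ≥ t₀ there is C_t with Σ_{γ ∈ Γ} φ(gγ^{-1}) φ(γ) / (1+|γ|)^t ≤ C_t φ(g) for all g ∈ Γ. -/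
/-!
Cut `Γ` into the shells `{γ : ⌊|γ|⌋ = n}`; since `ρ ≥ 1` each lies in `C_{n,ρ}`. Using `φ ≤ 1`,
on a shell with `n ≥ N₀` the bound (i) gives
`φ(gγ⁻¹) φ(γ) ≤ (|Q(n)| / |C_{n,ρ}|) · φ(gγ⁻¹) / φ(γ)`, so by (ii) the shell contributes at most
`|Q(n)| M φ(g) / (1 + n)^t = O(φ(g) / (1 + n)²)` once `t ≥ deg Q + 2`. The finitely many shells
with `n < N₀` are finite sets and are handled by the finite-set bound.
-/

open Finset

theorem summable_and_tsum_le_of_sum_fiber_le {α β : Type*} {f : α → ℝ} (hf : 0 ≤ f)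
    (k : α → β) {b : β → ℝ} (hb : Summable b)
    (hfiber : ∀ n (s : Finset α), (∀ a ∈ s, k a = n) → ∑ a ∈ s, f a ≤ b n) :
    Summable f ∧ ∑' a, f a ≤ ∑' n, b n := by
  classical
  have hb0 : 0 ≤ b := fun n => by simpa using hfiber n ∅ (by simp)
  have hpartial : ∀ u : Finset α, ∑ a ∈ u, f a ≤ ∑' n, b n := fun u => calc
    ∑ a ∈ u, f a = ∑ n ∈ u.image k, ∑ a ∈ u with k a = n, f a :=
      (sum_fiberwise_of_maps_to (fun a ha => mem_image_of_mem k ha) f).symm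
    _ ≤ ∑ n ∈ u.image k, b n :=
      sum_le_sum fun n _ => hfiber n _ fun a ha => (mem_filter.mp ha).2
    _ ≤ ∑' n, b n := hb.sum_le_tsum _ fun n _ => hb0 n
  exact ⟨summable_of_sum_le hf hpartial, Real.tsum_le_of_sum_le hf hpartial⟩

theorem summable_ite_lt_div_one_add_sq (N : ℕ) (a : ℕ → ℝ) (b : ℝ) :
    Summable fun n : ℕ => if n < N then a n else b / (1 + n) ^ 2 := by
  have hsq : Summable fun n : ℕ => 1 / ((n : ℝ) + 1) ^ 2 := by
    simpa using (summable_nat_add_iff 1).mpr (Real.summable_one_div_nat_pow.mpr one_lt_two)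
  refine Summable.congr_cofinite (f := fun n : ℕ => b / (1 + n) ^ 2) ?_ ?_
  · exact (hsq.mul_left b).congr fun n => by ring
  · rw [Nat.cofinite_eq_atTop]
    filter_upwards [Filter.eventually_ge_atTop N] with n hn
    simp [not_lt.mpr hn]

namespace Polynomial

theorem abs_eval_le_sum_abs_coeff_mul_one_add_pow (p : ℝ[X]) {x : ℝ} (hx : 0 ≤ x) :
    |p.eval x| ≤ (∑ i ∈ range (p.natDegree + 1), |p.coeff i|) * (1 + x) ^ p.natDegree := by
  rw [eval_eq_sum_range, sum_mul]
  refine (abs_sum_le_sum_abs _ _).trans (sum_le_sum fun i hi => ?_)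
  rw [abs_mul, abs_pow, abs_of_nonneg hx]
  gcongr
  calc x ^ i ≤ (1 + x) ^ i := by gcongr; linarith
    _ ≤ (1 + x) ^ p.natDegree :=
      pow_le_pow_right₀ (by linarith) (Nat.lt_succ_iff.mp (mem_range.mp hi))

theorem abs_eval_div_rpow_le (p : ℝ[X]) {x t : ℝ} (hx : 0 ≤ x) (ht : p.natDegree + 2 ≤ t) :
    |p.eval x| / (1 + x) ^ t ≤ (∑ i ∈ range (p.natDegree + 1), |p.coeff i|) / (1 + x) ^ 2 := by
  have hpow : (1 + x) ^ (p.natDegree + 2) ≤ (1 + x) ^ t := by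
    rw [← Real.rpow_natCast]
    exact Real.rpow_le_rpow_of_exponent_le (by linarith) (by exact_mod_cast ht)
  calc |p.eval x| / (1 + x) ^ t
      ≤ (∑ i ∈ range (p.natDegree + 1), |p.coeff i|) * (1 + x) ^ p.natDegree /
          (1 + x) ^ (p.natDegree + 2) :=
        div_le_div₀ (by positivity) (p.abs_eval_le_sum_abs_coeff_mul_one_add_pow hx)
          (by positivity) hpow
    _ = (∑ i ∈ range (p.natDegree + 1), |p.coeff i|) / (1 + x) ^ 2 := by
        rw [pow_add]; field_simp

end Polynomial

section WeightedSums

variable {α : Type*} {φ ψ ℓ : α → ℝ} {C s : Finset α}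

theorem sum_mul_div_rpow_le_sum_mul (hs : s ⊆ C) (hφ0 : ∀ γ, 0 ≤ φ γ) (hφle : ∀ γ, φ γ ≤ 1)
    (hψ0 : ∀ γ, 0 ≤ ψ γ) {c : α → ℝ} {m : ℝ} (hψ : ∀ γ, ψ γ ≤ c γ * m)
    (hℓ : ∀ γ, 0 ≤ ℓ γ) {t : ℝ} (ht : 0 ≤ t) :
    ∑ γ ∈ s, ψ γ * φ γ / (1 + ℓ γ) ^ t ≤ (∑ γ ∈ C, c γ) * m := by
  have hterm : ∀ γ, ψ γ * φ γ / (1 + ℓ γ) ^ t ≤ c γ * m := fun γ => calc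
    ψ γ * φ γ / (1 + ℓ γ) ^ t ≤ ψ γ * φ γ :=
      div_le_self (mul_nonneg (hψ0 γ) (hφ0 γ)) (Real.one_le_rpow (by linarith [hℓ γ]) ht)
    _ ≤ ψ γ := mul_le_of_le_one_right (hψ0 γ) (hφle γ)
    _ ≤ c γ * m := hψ γ
  rw [sum_mul]
  exact (sum_le_sum fun γ _ => hterm γ).trans
    (sum_le_sum_of_subset_of_nonneg hs fun γ _ _ => (hψ0 γ).trans (hψ γ))

theorem sum_mul_le_of_average_le (hφpos : ∀ γ, 0 < φ γ) (hφle : ∀ γ, φ γ ≤ 1)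
    (hψ : ∀ γ, 0 ≤ ψ γ) (hs : s ⊆ C) {a m : ℝ} (ha : 0 ≤ a) (hC : ∀ γ ∈ C, φ γ ≤ a / #C)
    (havg : (#C : ℝ)⁻¹ * ∑ γ ∈ C, ψ γ / φ γ ≤ m) :
    ∑ γ ∈ s, ψ γ * φ γ ≤ a * m := by
  have hterm : ∀ γ ∈ C, ψ γ * φ γ ≤ a / #C * (ψ γ / φ γ) := fun γ hγ => calc
    ψ γ * φ γ = ψ γ / φ γ * φ γ ^ 2 := by field_simp [(hφpos γ).ne']
    _ ≤ ψ γ / φ γ * φ γ := by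
      gcongr
      · exact div_nonneg (hψ γ) (hφpos γ).le
      · exact pow_le_of_le_one (hφpos γ).le (hφle γ) two_ne_zero
    _ ≤ ψ γ / φ γ * (a / #C) := by
      gcongr
      · exact div_nonneg (hψ γ) (hφpos γ).le
      · exact hC γ hγ
    _ = a / #C * (ψ γ / φ γ) := mul_comm _ _
  calc ∑ γ ∈ s, ψ γ * φ γ ≤ ∑ γ ∈ C, ψ γ * φ γ :=
        sum_le_sum_of_subset_of_nonneg hs fun γ _ _ => mul_nonneg (hψ γ) (hφpos γ).le
    _ ≤ ∑ γ ∈ C, a / #C * (ψ γ / φ γ) := sum_le_sum hterm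
    _ = a * ((#C : ℝ)⁻¹ * ∑ γ ∈ C, ψ γ / φ γ) := by rw [← mul_sum]; ring
    _ ≤ a * m := by gcongr

theorem sum_mul_div_rpow_le_of_average_le (hφpos : ∀ γ, 0 < φ γ) (hφle : ∀ γ, φ γ ≤ 1)
    (hψ : ∀ γ, 0 ≤ ψ γ) (hs : s ⊆ C) {x : ℝ} (hx : 0 ≤ x) (hℓ : ∀ γ ∈ s, x ≤ ℓ γ)
    {p : Polynomial ℝ} (hC : ∀ γ ∈ C, φ γ ≤ p.eval x / #C) {m : ℝ} (hm : 0 ≤ m)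
    (havg : (#C : ℝ)⁻¹ * ∑ γ ∈ C, ψ γ / φ γ ≤ m) {t : ℝ} (ht : p.natDegree + 2 ≤ t) :
    ∑ γ ∈ s, ψ γ * φ γ / (1 + ℓ γ) ^ t ≤
      (∑ i ∈ range (p.natDegree + 1), |p.coeff i|) / (1 + x) ^ 2 * m := by
  have ht0 : 0 ≤ t := le_trans (by positivity) ht
  have hCabs : ∀ γ ∈ C, φ γ ≤ |p.eval x| / #C := fun γ hγ =>
    (hC γ hγ).trans (by gcongr; exact le_abs_self _)
  calc ∑ γ ∈ s, ψ γ * φ γ / (1 + ℓ γ) ^ t ≤ ∑ γ ∈ s, ψ γ * φ γ / (1 + x) ^ t := by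
        refine sum_le_sum fun γ hγ => ?_
        have := hℓ γ hγ
        gcongr
        exact mul_nonneg (hψ γ) (hφpos γ).le
    _ = (∑ γ ∈ s, ψ γ * φ γ) / (1 + x) ^ t := (sum_div _ _ _).symm
    _ ≤ |p.eval x| * m / (1 + x) ^ t := by
        gcongr
        exact sum_mul_le_of_average_le hφpos hφle hψ hs (abs_nonneg _) hCabs havg
    _ = |p.eval x| / (1 + x) ^ t * m := by ring
    _ ≤ _ := mul_le_mul_of_nonneg_right (p.abs_eval_div_rpow_le hx ht) hm

end WeightedSums

theorem mem_annulus_floor {G : Type*} {ℓ : G → ℝ} {ρ : ℝ} (hρ : 1 ≤ ρ) {C : ℕ → Finset G}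
    (hC : ∀ (n : ℕ) (γ : G), γ ∈ C n ↔ (n : ℝ) - ρ ≤ ℓ γ ∧ ℓ γ ≤ (n : ℝ) + ρ) {γ : G}
    (hγ : 0 ≤ ℓ γ) : γ ∈ C ⌊ℓ γ⌋₊ := by
  have := Nat.floor_le hγ
  have := Nat.lt_floor_add_one (ℓ γ)
  exact (hC _ γ).mpr ⟨by linarith, by linarith⟩

theorem stmt16_general {G : Type*} [Group G]
    -- length function
    (ℓ : G → ℝ) (hℓpos : ∀ γ, 0 ≤ ℓ γ)
    -- Harish-Chandra function `φ : Γ → (0,1]`, symmetric, `φ(e) = 1`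
    (φ : G → ℝ) (hφpos : ∀ γ, 0 < φ γ) (hφle : ∀ γ, φ γ ≤ 1)
    -- annuli `C_{n,ρ}` are finite, `ρ > 1`
    (ρ : ℝ) (hρ : 1 < ρ)
    (Cn : ℕ → Finset G)
    (hCn : ∀ (n : ℕ) (γ : G), γ ∈ Cn n ↔ (n : ℝ) - ρ ≤ ℓ γ ∧ ℓ γ ≤ (n : ℝ) + ρ)
    (N₀ : ℕ)
    -- (i) upper bound of `φ` on annuli by a polynomial over the cardinality
    (Q : Polynomial ℝ)
    (hQ : ∀ n : ℕ, N₀ ≤ n → ∀ γ ∈ Cn n, φ γ ≤ Q.eval (n : ℝ) / ((Cn n).card : ℝ))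
    -- (ii) uniform averaged bound
    (M : ℝ) (hM : 0 < M)
    (hunif : ∀ n : ℕ, N₀ ≤ n → ∀ g : G,
      ((Cn n).card : ℝ)⁻¹ * ∑ γ ∈ Cn n, φ (g * γ⁻¹) / φ γ ≤ M * φ g)
    -- finite-set bound coming from positivity of the representation
    (hfin : ∀ γ : G, ∃ Cγ : ℝ, 0 < Cγ ∧ ∀ g : G, φ (g * γ⁻¹) ≤ Cγ * φ g) :
    ∃ t₀ > (0:ℝ), ∀ t : ℝ, t₀ ≤ t → ∃ Ct > (0:ℝ), ∀ g : G,
      Summable (fun γ : G => φ (g * γ⁻¹) * φ γ / (1 + ℓ γ) ^ t) ∧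
      ∑' γ : G, φ (g * γ⁻¹) * φ γ / (1 + ℓ γ) ^ t ≤ Ct * φ g := by
  choose c hc_pos hc using hfin
  set K := ∑ i ∈ range (Q.natDegree + 1), |Q.coeff i|
  set B : ℕ → ℝ := fun n => if n < N₀ then ∑ γ ∈ Cn n, c γ else K * M / (1 + n) ^ 2
  have hB0 : 0 ≤ B := fun n => by
    by_cases hn : n < N₀
    · simpa [B, hn] using sum_nonneg fun γ (_ : γ ∈ Cn n) => (hc_pos γ).le
    · simp only [B, hn, if_false]; positivity
  refine ⟨Q.natDegree + 2, by positivity, fun t ht =>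
    ⟨∑' n, B n + 1, add_pos_of_nonneg_of_pos (tsum_nonneg hB0) one_pos, fun g => ?_⟩⟩
  have hfiber : ∀ n (s : Finset G), (∀ γ ∈ s, ⌊ℓ γ⌋₊ = n) →
      ∑ γ ∈ s, φ (g * γ⁻¹) * φ γ / (1 + ℓ γ) ^ t ≤ B n * φ g := by
    intro n s hs
    have hsC : s ⊆ Cn n := fun γ hγ => hs γ hγ ▸ mem_annulus_floor hρ.le hCn (hℓpos γ)
    by_cases hn : n < N₀
    · simpa [B, hn] using sum_mul_div_rpow_le_sum_mul hsC (fun γ => (hφpos γ).le) hφle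
        (fun γ => (hφpos _).le) (hc · g) hℓpos (le_trans (by positivity) ht)
    · calc _ ≤ K / (1 + n) ^ 2 * (M * φ g) :=
            sum_mul_div_rpow_le_of_average_le hφpos hφle (fun γ => (hφpos _).le) hsC
              n.cast_nonneg (fun γ hγ => hs γ hγ ▸ Nat.floor_le (hℓpos γ)) (hQ n (not_lt.mp hn))
              (mul_pos hM (hφpos g)).le (hunif n (not_lt.mp hn) g) ht
        _ = B n * φ g := by simp only [B, hn, if_false]; ring
  obtain ⟨hsum, hle⟩ := summable_and_tsum_le_of_sum_fiber_le
    (fun γ => div_nonneg (mul_nonneg (hφpos _).le (hφpos γ).le)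
      (Real.rpow_nonneg (by linarith [hℓpos γ]) t))
    (fun γ => ⌊ℓ γ⌋₊) ((summable_ite_lt_div_one_add_sq N₀ _ _).mul_right (φ g)) hfiber
  refine ⟨hsum, hle.trans ?_⟩
  rw [tsum_mul_right]
  exact mul_le_mul_of_nonneg_right (by linarith) (hφpos g).le

/-- key convolution estimate for the Harish-Chandra function:
given (i) `φ(γ) ≤ Q(n)/|C_{n,ρ}|` on annuli, (ii) the uniform averaged bound
`(1/|C_{n,ρ}|) Σ_{γ∈C_{n,ρ}} φ(gγ⁻¹)/φ(γ) ≤ M φ(g)`, and the finite-set bound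
`φ(gγ⁻¹) ≤ C_γ φ(g)`, there exists `t₀ > 0` such that for all `t ≥ t₀` there is
`C_t` with `Σ_γ φ(gγ⁻¹)φ(γ)/(1+|γ|)^t ≤ C_t φ(g)` for all `g`. -/
theorem stmt16 {G : Type*} [Group G]
    -- length function
    (ℓ : G → ℝ) (hℓ0 : ℓ 1 = 0) (hℓpos : ∀ γ, 0 ≤ ℓ γ)
    (hℓinv : ∀ γ, ℓ γ⁻¹ = ℓ γ) (hℓsub : ∀ γ g, ℓ (γ * g) ≤ ℓ γ + ℓ g)
    -- Harish-Chandra function `φ : Γ → (0,1]`, symmetric, `φ(e) = 1`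
    (φ : G → ℝ) (hφpos : ∀ γ, 0 < φ γ) (hφle : ∀ γ, φ γ ≤ 1)
    (hφe : φ 1 = 1) (hφinv : ∀ γ, φ γ⁻¹ = φ γ)
    -- annuli `C_{n,ρ}` are finite, `ρ > 1`
    (ρ : ℝ) (hρ : 1 < ρ)
    (Cn : ℕ → Finset G)
    (hCn : ∀ (n : ℕ) (γ : G), γ ∈ Cn n ↔ (n : ℝ) - ρ ≤ ℓ γ ∧ ℓ γ ≤ (n : ℝ) + ρ)
    (N₀ : ℕ)
    -- (i) upper bound of `φ` on annuli by a polynomial over the cardinality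
    (Q : Polynomial ℝ)
    (hQ : ∀ n : ℕ, N₀ ≤ n → ∀ γ ∈ Cn n, φ γ ≤ Q.eval (n : ℝ) / ((Cn n).card : ℝ))
    -- (ii) uniform averaged bound
    (M : ℝ) (hM : 0 < M)
    (hunif : ∀ n : ℕ, N₀ ≤ n → ∀ g : G,
      ((Cn n).card : ℝ)⁻¹ * ∑ γ ∈ Cn n, φ (g * γ⁻¹) / φ γ ≤ M * φ g)
    -- finite-set bound coming from positivity of the representation
    (hfin : ∀ γ : G, ∃ Cγ : ℝ, 0 < Cγ ∧ ∀ g : G, φ (g * γ⁻¹) ≤ Cγ * φ g) :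
    ∃ t₀ > (0:ℝ), ∀ t : ℝ, t₀ ≤ t → ∃ Ct > (0:ℝ), ∀ g : G,
      Summable (fun γ : G => φ (g * γ⁻¹) * φ γ / (1 + ℓ γ) ^ t) ∧
      ∑' γ : G, φ (g * γ⁻¹) * φ γ / (1 + ℓ γ) ^ t ≤ Ct * φ g :=
  stmt16_general ℓ hℓpos φ hφpos hφle ρ hρ Cn hCn N₀ Q hQ M hM hunif hfin
end

section
/- Harish-Chandra Schwartz space is a convolution algebra: Let Γ be a discrete group with a length function |·| and φ : Γ → (0,∞) with φ(γ^{-1}) = φ(γ). Suppose there is t₀ > 0 such that for all t ≥ t₀ there is C_t with Σ_γ φ(gγ^{-1})φ(γ)/(1+|γ|)^t ≤ C_t φ(g) for all g ∈ Γ. Then for all t ≥ t₀, whenever f₁, f₂ : Γ → ℂ satisfy |f_i(γ)| ≤ A_i φ(γ)/(1+|γ|)^t, the convolution f₁ * f₂(g) = Σ_γ f₁(γ) f₂(γ^{-1}g) converges absolutely and satisfies |f₁ * f₂(g)| ≤ 2^{t+1} A₁ A₂ C_t φ(g)/(1+|g|)^t for all g ∈ Γ. -/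
/-!
Split the sum according to which of `γ`, `γ⁻¹ g` is longer. By the triangle inequality
`1 + |g| ≤ (1 + |γ|) + (1 + |γ⁻¹ g|)`, so the longer factor has `(1 + ·)^t ≥ 2^{-t} (1 + |g|)^t`;
hence each term of the convolution is at most `2^t A₁ A₂ (1 + |g|)^{-t}` times the sum of two
weights, one carrying only `(1 + |γ|)^{-t}` and one carrying only `(1 + |γ⁻¹ g|)^{-t}`. After the
substitutions `γ ↦ γ⁻¹` and `γ ↦ g γ⁻¹` respectively, each weight sums to at most `C_t φ(g)`
by the convolution estimate.
-/

open Real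

lemma one_div_rpow_mul_rpow_le {u v w t : ℝ} (hu : 0 < u) (hv : 0 < v) (hw : 0 < w) (ht : 0 ≤ t)
    (h : w ≤ u + v) : 1 / (u ^ t * v ^ t) ≤ 2 ^ t / w ^ t * (1 / u ^ t + 1 / v ^ t) := by
  wlog huv : u ≤ v generalizing u v
  · rw [mul_comm (u ^ t), add_comm (1 / u ^ t)]
    exact this hv hu (by linarith) (le_of_not_ge huv)
  have hwv : w ^ t ≤ 2 ^ t * v ^ t := by
    rw [← mul_rpow zero_le_two hv.le]
    exact rpow_le_rpow hw.le (by linarith) ht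
  have hv_inv : 1 / v ^ t ≤ 2 ^ t / w ^ t := by
    rw [div_le_div_iff₀ (by positivity) (by positivity)]
    linarith
  calc 1 / (u ^ t * v ^ t) = 1 / u ^ t * (1 / v ^ t) := (one_div_mul_one_div _ _).symm
    _ ≤ 1 / u ^ t * (2 ^ t / w ^ t) := by gcongr
    _ ≤ 2 ^ t / w ^ t * (1 / u ^ t + 1 / v ^ t) := by
      rw [mul_comm]
      gcongr
      exact le_add_of_nonneg_right (by positivity)

lemma summable_and_tsum_le_of_le_mul_add {ι : Type*} {F a b : ι → ℝ} {K Ba Bb : ℝ}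
    (hF : ∀ i, 0 ≤ F i) (hK : 0 ≤ K) (hle : ∀ i, F i ≤ K * (a i + b i))
    (ha : Summable a ∧ ∑' i, a i ≤ Ba) (hb : Summable b ∧ ∑' i, b i ≤ Bb) :
    Summable F ∧ ∑' i, F i ≤ K * (Ba + Bb) := by
  have hab : Summable fun i => K * (a i + b i) := (ha.1.add hb.1).mul_left K
  have hF_sum : Summable F := .of_nonneg_of_le hF hle hab
  refine ⟨hF_sum, ?_⟩
  calc ∑' i, F i ≤ ∑' i, K * (a i + b i) := hF_sum.tsum_le_tsum hle hab
    _ = K * (∑' i, a i + ∑' i, b i) := by rw [tsum_mul_left, ha.1.tsum_add hb.1]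
    _ ≤ K * (Ba + Bb) := by gcongr; exacts [ha.2, hb.2]

lemma Equiv.summable_and_tsum_le {α β : Type*} {f : β → ℝ} {B : ℝ} (e : α ≃ β)
    (h : Summable (fun a => f (e a)) ∧ ∑' a, f (e a) ≤ B) : Summable f ∧ ∑' b, f b ≤ B :=
  ⟨e.summable_iff.mp h.1, e.tsum_eq f ▸ h.2⟩

section ConvolutionEstimate

variable {G : Type*} [Group G]

def ConvolutionEstimate (φ w : G → ℝ) (C : ℝ) : Prop :=
  ∀ g, Summable (fun γ => φ (g * γ⁻¹) * φ γ / w γ) ∧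
    ∑' γ, φ (g * γ⁻¹) * φ γ / w γ ≤ C * φ g

variable {φ w : G → ℝ} {C : ℝ}

lemma ConvolutionEstimate.weight_right (h : ConvolutionEstimate φ w C) (g : G) :
    Summable (fun γ => φ γ * φ (γ⁻¹ * g) / w (γ⁻¹ * g)) ∧
      ∑' γ, φ γ * φ (γ⁻¹ * g) / w (γ⁻¹ * g) ≤ C * φ g :=
  (Equiv.divLeft g).summable_and_tsum_le <| by
    simpa [div_eq_mul_inv] using h g

lemma ConvolutionEstimate.weight_left (h : ConvolutionEstimate φ w C)
    (hφ : ∀ γ, φ γ⁻¹ = φ γ) (hw : ∀ γ, w γ⁻¹ = w γ) (g : G) :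
    Summable (fun γ => φ γ * φ (γ⁻¹ * g) / w γ) ∧
      ∑' γ, φ γ * φ (γ⁻¹ * g) / w γ ≤ C * φ g :=
  (Equiv.inv G).summable_and_tsum_le <| by
    have hφg : ∀ γ, φ (γ * g) = φ (g⁻¹ * γ⁻¹) := fun γ => by rw [← hφ, mul_inv_rev]
    simpa [hφ, hw, hφg, mul_comm] using h g⁻¹

end ConvolutionEstimate

lemma nonneg_of_norm_le_mul_div {E : Type*} [SeminormedAddCommGroup E] {x : E} {A p q : ℝ}
    (hp : 0 < p) (hq : 0 < q) (h : ‖x‖ ≤ A * p / q) : 0 ≤ A := by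
  have hApq : 0 ≤ A * (p / q) := by rw [← mul_div_assoc]; exact (norm_nonneg x).trans h
  exact nonneg_of_mul_nonneg_left hApq (by positivity)

lemma norm_mul_inv_mul_le {G : Type*} [Group G] {ℓ φ : G → ℝ} {t A₁ A₂ : ℝ} {f₁ f₂ : G → ℂ}
    (hℓpos : ∀ γ, 0 ≤ ℓ γ) (hℓsub : ∀ γ g, ℓ (γ * g) ≤ ℓ γ + ℓ g) (hφ : ∀ γ, 0 ≤ φ γ)
    (ht : 0 ≤ t) (hA₁ : 0 ≤ A₁) (hA₂ : 0 ≤ A₂)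
    (hf₁ : ∀ γ, ‖f₁ γ‖ ≤ A₁ * φ γ / (1 + ℓ γ) ^ t)
    (hf₂ : ∀ γ, ‖f₂ γ‖ ≤ A₂ * φ γ / (1 + ℓ γ) ^ t) (γ g : G) :
    ‖f₁ γ * f₂ (γ⁻¹ * g)‖ ≤ 2 ^ t * A₁ * A₂ / (1 + ℓ g) ^ t *
      (φ γ * φ (γ⁻¹ * g) / (1 + ℓ γ) ^ t + φ γ * φ (γ⁻¹ * g) / (1 + ℓ (γ⁻¹ * g)) ^ t) := by
  have hγ := hℓpos γ
  have hγg := hℓpos (γ⁻¹ * g)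
  have htri : 1 + ℓ g ≤ (1 + ℓ γ) + (1 + ℓ (γ⁻¹ * g)) := by
    have := hℓsub γ (γ⁻¹ * g)
    rw [mul_inv_cancel_left] at this
    linarith
  have hφγ := hφ γ
  have hφγg := hφ (γ⁻¹ * g)
  calc ‖f₁ γ * f₂ (γ⁻¹ * g)‖ = ‖f₁ γ‖ * ‖f₂ (γ⁻¹ * g)‖ := norm_mul _ _
    _ ≤ (A₁ * φ γ / (1 + ℓ γ) ^ t) * (A₂ * φ (γ⁻¹ * g) / (1 + ℓ (γ⁻¹ * g)) ^ t) :=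
      mul_le_mul (hf₁ γ) (hf₂ _) (norm_nonneg _) (by positivity)
    _ = A₁ * A₂ * (φ γ * φ (γ⁻¹ * g)) * (1 / ((1 + ℓ γ) ^ t * (1 + ℓ (γ⁻¹ * g)) ^ t)) := by
      ring
    _ ≤ A₁ * A₂ * (φ γ * φ (γ⁻¹ * g)) *
        (2 ^ t / (1 + ℓ g) ^ t * (1 / (1 + ℓ γ) ^ t + 1 / (1 + ℓ (γ⁻¹ * g)) ^ t)) := by
      gcongr
      exact one_div_rpow_mul_rpow_le (by linarith) (by linarith) (by linarith [hℓpos g]) ht htri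
    _ = _ := by ring

theorem stmt17_general {G : Type*} [Group G]
    -- length function
    (ℓ : G → ℝ) (hℓpos : ∀ γ, 0 ≤ ℓ γ)
    (hℓinv : ∀ γ, ℓ γ⁻¹ = ℓ γ) (hℓsub : ∀ γ g, ℓ (γ * g) ≤ ℓ γ + ℓ g)
    -- symmetric positive Harish-Chandra function
    (φ : G → ℝ) (hφpos : ∀ γ, 0 < φ γ) (hφinv : ∀ γ, φ γ⁻¹ = φ γ)
    (t₀ : ℝ) (ht₀ : 0 < t₀) (t : ℝ) (ht : t₀ ≤ t)
    -- the convolution estimate for `φ` at exponent `t`, with constant `C_t`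
    (Ct : ℝ)
    (hconv : ∀ g : G,
      Summable (fun γ : G => φ (g * γ⁻¹) * φ γ / (1 + ℓ γ) ^ t) ∧
      ∑' γ : G, φ (g * γ⁻¹) * φ γ / (1 + ℓ γ) ^ t ≤ Ct * φ g)
    -- two elements of the Schwartz space `S_t(Γ)`
    (f₁ f₂ : G → ℂ) (A₁ A₂ : ℝ)
    (hf₁ : ∀ γ, ‖f₁ γ‖ ≤ A₁ * φ γ / (1 + ℓ γ) ^ t)
    (hf₂ : ∀ γ, ‖f₂ γ‖ ≤ A₂ * φ γ / (1 + ℓ γ) ^ t)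
    (g : G) :
    Summable (fun γ : G => ‖f₁ γ * f₂ (γ⁻¹ * g)‖) ∧
    ‖∑' γ : G, f₁ γ * f₂ (γ⁻¹ * g)‖
      ≤ 2 ^ (t + 1) * A₁ * A₂ * Ct * φ g / (1 + ℓ g) ^ t := by
  have ht_nonneg : 0 ≤ t := ht₀.le.trans ht
  have hweight_pos : ∀ γ, 0 < (1 + ℓ γ) ^ t := fun γ => by have := hℓpos γ; positivity
  have hA₁ := nonneg_of_norm_le_mul_div (hφpos 1) (hweight_pos 1) (hf₁ 1)
  have hA₂ := nonneg_of_norm_le_mul_div (hφpos 1) (hweight_pos 1) (hf₂ 1)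
  have hconv' : ConvolutionEstimate φ (fun γ => (1 + ℓ γ) ^ t) Ct := hconv
  obtain ⟨hsum, hle⟩ := summable_and_tsum_le_of_le_mul_add (fun _ => norm_nonneg _)
    (div_nonneg (by positivity) (hweight_pos g).le)
    (norm_mul_inv_mul_le hℓpos hℓsub (fun γ => (hφpos γ).le) ht_nonneg hA₁ hA₂ hf₁ hf₂ · g)
    (hconv'.weight_left hφinv (by simp [hℓinv]) g) (hconv'.weight_right g)
  refine ⟨hsum, (norm_tsum_le_tsum_norm hsum).trans (hle.trans_eq ?_)⟩
  rw [rpow_add_one two_ne_zero]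
  ring

/-- the Harish-Chandra Schwartz space is a convolution algebra:
under the convolution estimate for `φ`, if `|f_i(γ)| ≤ A_i φ(γ)/(1+|γ|)^t` then
the convolution `f₁ * f₂` converges absolutely and
`|f₁ * f₂(g)| ≤ 2^{t+1} A₁ A₂ C_t φ(g)/(1+|g|)^t`. -/
theorem stmt17 {G : Type*} [Group G]
    -- length function
    (ℓ : G → ℝ) (hℓpos : ∀ γ, 0 ≤ ℓ γ)
    (hℓinv : ∀ γ, ℓ γ⁻¹ = ℓ γ) (hℓsub : ∀ γ g, ℓ (γ * g) ≤ ℓ γ + ℓ g)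
    -- symmetric positive Harish-Chandra function
    (φ : G → ℝ) (hφpos : ∀ γ, 0 < φ γ) (hφinv : ∀ γ, φ γ⁻¹ = φ γ)
    (t₀ : ℝ) (ht₀ : 0 < t₀) (t : ℝ) (ht : t₀ ≤ t)
    -- the convolution estimate for `φ` at exponent `t`, with constant `C_t`
    (Ct : ℝ) (hCt : 0 < Ct)
    (hconv : ∀ g : G,
      Summable (fun γ : G => φ (g * γ⁻¹) * φ γ / (1 + ℓ γ) ^ t) ∧
      ∑' γ : G, φ (g * γ⁻¹) * φ γ / (1 + ℓ γ) ^ t ≤ Ct * φ g)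
    -- two elements of the Schwartz space `S_t(Γ)`
    (f₁ f₂ : G → ℂ) (A₁ A₂ : ℝ)
    (hf₁ : ∀ γ, ‖f₁ γ‖ ≤ A₁ * φ γ / (1 + ℓ γ) ^ t)
    (hf₂ : ∀ γ, ‖f₂ γ‖ ≤ A₂ * φ γ / (1 + ℓ γ) ^ t)
    (g : G) :
    Summable (fun γ : G => ‖f₁ γ * f₂ (γ⁻¹ * g)‖) ∧
    ‖∑' γ : G, f₁ γ * f₂ (γ⁻¹ * g)‖
      ≤ 2 ^ (t + 1) * A₁ * A₂ * Ct * φ g / (1 + ℓ g) ^ t :=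
  stmt17_general ℓ hℓpos hℓinv hℓsub φ hφpos hφinv t₀ ht₀ t ht Ct hconv f₁ f₂ A₁ A₂ hf₁ hf₂ g
end

section
/- Schwartz space acts boundedly on ℓ²: Under the same convolution hypothesis on φ (there is t₀ such that for t ≥ t₀, Σ_γ φ(gγ^{-1})φ(γ)/(1+|γ|)^t ≤ C_t φ(g) for all g, and symmetrically Σ_γ φ(γ)φ(γγ')/(1+|γ|)^t ≤ C_t φ(γ') for all γ'), for every h ∈ ℓ²(Γ) and every f with |f(γ)| ≤ φ(γ)/(1+|γ|)^t: Σ_g ( Σ_γ φ(γ)/(1+|γ|)^t · |h(γ^{-1}g)| )² ≤ C_t² ‖h‖₂², hence f * h ∈ ℓ²(Γ) with ‖f * h‖₂ ≤ C_t ‖h‖₂. -/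
/-!
With `ψ γ = φ γ / (1 + ℓ γ) ^ t`, Cauchy–Schwarz with the weight `φ (γ⁻¹ * g)` bounds
`(∑ γ, ψ γ * |h (γ⁻¹ * g)|) ^ 2` by
`(∑ γ, ψ γ * φ (γ⁻¹ * g)) * ∑ γ, ψ γ * h (γ⁻¹ * g) ^ 2 / φ (γ⁻¹ * g)`,
and the first factor is at most `C * φ g` because `ψ` is symmetric. Summing over `g` and
substituting `g = γ * x`, the convolution estimate `∑ γ, ψ γ * φ (γ * x) ≤ C * φ x` bounds the total
by `C ^ 2 * ∑ x, h x ^ 2`. All sums are taken in `ℝ≥0∞`, so summability only has to be recovered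
at the end, from the finiteness of the bound.
-/

open scoped ENNReal NNReal

namespace ENNReal

theorem two_mul_mul_le_div_mul_add_div_mul (a b : ℝ≥0∞) {u v : ℝ≥0∞} (hu₀ : u ≠ 0)
    (hu : u ≠ ∞) (hv₀ : v ≠ 0) (hv : v ≠ ∞) :
    2 * (a * b) ≤ a ^ 2 / u * v + b ^ 2 / v * u := by
  rcases eq_or_ne a ∞ with rfl | ha
  · simp [top_div_of_ne_top hu, hv₀]
  rcases eq_or_ne b ∞ with rfl | hb
  · simp [top_div_of_ne_top hv, hu₀]
  lift a to ℝ≥0 using ha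
  lift b to ℝ≥0 using hb
  lift u to ℝ≥0 using hu
  lift v to ℝ≥0 using hv
  have hu₀' : u ≠ 0 := mod_cast hu₀
  have hv₀' : v ≠ 0 := mod_cast hv₀
  rw [← coe_pow, ← coe_pow, ← coe_div hu₀', ← coe_div hv₀']
  norm_cast
  refine two_mul_le_add_of_sq_le_mul zero_le zero_le (le_of_eq ?_)
  field_simp

theorem tsum_mul_sq_le {ι : Type*} (w x u : ι → ℝ≥0∞) (hu₀ : ∀ i, u i ≠ 0)
    (hu : ∀ i, u i ≠ ∞) :
    (∑' i, w i * x i) ^ 2 ≤ (∑' i, w i * u i) * ∑' i, w i * (x i ^ 2 / u i) := by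
  set A : ι → ℝ≥0∞ := fun i => w i * (x i ^ 2 / u i)
  set B : ι → ℝ≥0∞ := fun i => w i * u i
  have hAB : ∀ i j, 2 * ((w i * x i) * (w j * x j)) ≤ A i * B j + A j * B i := fun i j => by
    calc 2 * ((w i * x i) * (w j * x j)) = w i * w j * (2 * (x i * x j)) := by ring
      _ ≤ w i * w j * (x i ^ 2 / u i * u j + x j ^ 2 / u j * u i) := by
        gcongr; exact two_mul_mul_le_div_mul_add_div_mul _ _ (hu₀ i) (hu i) (hu₀ j) (hu j)
      _ = A i * B j + A j * B i := by simp only [A, B]; ring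
  rw [← ENNReal.mul_le_mul_iff_right two_ne_zero ofNat_ne_top]
  calc 2 * (∑' i, w i * x i) ^ 2 = ∑' i, ∑' j, 2 * ((w i * x i) * (w j * x j)) := by
        simp only [sq, ENNReal.tsum_mul_left, ENNReal.tsum_mul_right]
    _ ≤ ∑' i, ∑' j, (A i * B j + A j * B i) :=
        ENNReal.tsum_le_tsum fun i => ENNReal.tsum_le_tsum fun j => hAB i j
    _ = 2 * ((∑' i, B i) * ∑' i, A i) := by
        simp only [ENNReal.tsum_add, ENNReal.tsum_mul_left, ENNReal.tsum_mul_right]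
        ring

theorem tsum_conv_sq_le {G : Type*} [Group G] (Ψ Φ H : G → ℝ≥0∞) (C : ℝ≥0∞)
    (hΦ₀ : ∀ g, Φ g ≠ 0) (hΦ : ∀ g, Φ g ≠ ∞)
    (hΨinv : ∀ γ, Ψ γ⁻¹ = Ψ γ) (hconv : ∀ g, ∑' γ, Ψ γ * Φ (γ * g) ≤ C * Φ g) :
    ∑' g, (∑' γ, Ψ γ * H (γ⁻¹ * g)) ^ 2 ≤ C ^ 2 * ∑' g, H g ^ 2 := by
  have hconv' : ∀ g, ∑' γ, Ψ γ * Φ (γ⁻¹ * g) ≤ C * Φ g := fun g => by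
    rw [← (Equiv.inv G).tsum_eq]
    simpa only [Equiv.inv_apply, hΨinv, inv_inv] using hconv g
  calc ∑' g, (∑' γ, Ψ γ * H (γ⁻¹ * g)) ^ 2
      ≤ ∑' g, (∑' γ, Ψ γ * Φ (γ⁻¹ * g)) * ∑' γ, Ψ γ * (H (γ⁻¹ * g) ^ 2 / Φ (γ⁻¹ * g)) :=
        ENNReal.tsum_le_tsum fun g =>
          ENNReal.tsum_mul_sq_le _ _ _ (fun γ => hΦ₀ _) (fun γ => hΦ _)
    _ ≤ ∑' g, C * Φ g * ∑' γ, Ψ γ * (H (γ⁻¹ * g) ^ 2 / Φ (γ⁻¹ * g)) :=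
        ENNReal.tsum_le_tsum fun g => by gcongr; exact hconv' g
    _ = C * ∑' γ, Ψ γ * ∑' x, Φ (γ * x) * (H x ^ 2 / Φ x) := by
        simp only [← ENNReal.tsum_mul_left]
        rw [ENNReal.tsum_comm]
        refine tsum_congr fun γ => ?_
        rw [← (Equiv.mulLeft γ).tsum_eq]
        refine tsum_congr fun x => ?_
        simp only [Equiv.coe_mulLeft, inv_mul_cancel_left]
        ring
    _ = C * ∑' x, H x ^ 2 / Φ x * ∑' γ, Ψ γ * Φ (γ * x) := by
        simp only [← ENNReal.tsum_mul_left]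
        rw [ENNReal.tsum_comm]
        refine tsum_congr fun x => tsum_congr fun γ => ?_
        ring
    _ ≤ C * ∑' x, H x ^ 2 / Φ x * (C * Φ x) := by gcongr with x; exact hconv x
    _ = C ^ 2 * ∑' x, H x ^ 2 := by
        simp only [← ENNReal.tsum_mul_left]
        refine tsum_congr fun x => ?_
        calc C * (H x ^ 2 / Φ x * (C * Φ x)) = C ^ 2 * (H x ^ 2 / Φ x * Φ x) := by ring
          _ = C ^ 2 * H x ^ 2 := by rw [ENNReal.div_mul_cancel (hΦ₀ x) (hΦ x)]

theorem ofReal_abs_tsum_le {ι : Type*} (a : ι → ℝ) :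
    ENNReal.ofReal |∑' i, a i| ≤ ∑' i, ENNReal.ofReal |a i| := by
  by_cases ha : Summable a
  · calc ENNReal.ofReal |∑' i, a i| ≤ ENNReal.ofReal (∑' i, |a i|) :=
          ENNReal.ofReal_le_ofReal (by
            simpa only [Real.norm_eq_abs] using norm_tsum_le_tsum_norm ha.norm)
      _ = ∑' i, ENNReal.ofReal |a i| :=
          ENNReal.ofReal_tsum_of_nonneg (fun i => abs_nonneg _) ha.abs
  · simp [tsum_eq_zero_of_not_summable ha]

end ENNReal

theorem summable_sq_and_tsum_sq_le_of_ofReal_abs_le {ι : Type*} {u : ι → ℝ} {E : ι → ℝ≥0∞}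
    {B : ℝ} (hB : 0 ≤ B) (hu : ∀ i, ENNReal.ofReal |u i| ≤ E i)
    (hE : ∑' i, E i ^ 2 ≤ ENNReal.ofReal B) :
    Summable (fun i => u i ^ 2) ∧ ∑' i, u i ^ 2 ≤ B := by
  have hle : ∑' i, ENNReal.ofReal (u i ^ 2) ≤ ENNReal.ofReal B :=
    calc ∑' i, ENNReal.ofReal (u i ^ 2) = ∑' i, ENNReal.ofReal |u i| ^ 2 := by
          simp only [← ENNReal.ofReal_pow (abs_nonneg _), sq_abs]
      _ ≤ ∑' i, E i ^ 2 := ENNReal.tsum_le_tsum fun i => pow_le_pow_left₀ zero_le (hu i) 2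
      _ ≤ ENNReal.ofReal B := hE
  have hs : Summable (fun i => u i ^ 2) := by
    simpa only [ENNReal.toReal_ofReal (sq_nonneg _)] using
      ENNReal.summable_toReal (hle.trans_lt ENNReal.ofReal_lt_top).ne
  refine ⟨hs, ?_⟩
  rwa [← ENNReal.ofReal_tsum_of_nonneg (fun i => sq_nonneg _) hs,
    ENNReal.ofReal_le_ofReal_iff hB] at hle

theorem summable_sq_and_tsum_sq_le_of_abs_le_conv {G : Type*} [Group G] {ψ φ : G → ℝ} {C : ℝ}
    (hψ : ∀ γ, 0 ≤ ψ γ) (hψinv : ∀ γ, ψ γ⁻¹ = ψ γ) (hφ : ∀ g, 0 < φ g) (hC : 0 ≤ C)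
    (hconv : ∀ g, Summable (fun γ => ψ γ * φ (γ * g)) ∧ ∑' γ, ψ γ * φ (γ * g) ≤ C * φ g)
    {h : G → ℝ} (hh : Summable (fun g => h g ^ 2)) (a : G → G → ℝ)
    (ha : ∀ g γ, |a g γ| ≤ ψ γ * |h (γ⁻¹ * g)|) :
    Summable (fun g => (∑' γ, a g γ) ^ 2) ∧ ∑' g, (∑' γ, a g γ) ^ 2 ≤ C ^ 2 * ∑' g, h g ^ 2 := by
  set Ψ : G → ℝ≥0∞ := fun γ => ENNReal.ofReal (ψ γ)
  set Φ : G → ℝ≥0∞ := fun g => ENNReal.ofReal (φ g)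
  set H : G → ℝ≥0∞ := fun g => ENNReal.ofReal |h g|
  have hconv' : ∀ g, ∑' γ, Ψ γ * Φ (γ * g) ≤ ENNReal.ofReal C * Φ g := fun g => by
    obtain ⟨hs, hle⟩ := hconv g
    simp only [Ψ, Φ, ← ENNReal.ofReal_mul (hψ _), ← ENNReal.ofReal_mul hC]
    rw [← ENNReal.ofReal_tsum_of_nonneg (fun γ => mul_nonneg (hψ γ) (hφ _).le) hs]
    exact ENNReal.ofReal_le_ofReal hle
  have hH : ∑' g, H g ^ 2 = ENNReal.ofReal (∑' g, h g ^ 2) := by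
    simp only [H, ← ENNReal.ofReal_pow (abs_nonneg _), sq_abs]
    exact (ENNReal.ofReal_tsum_of_nonneg (fun g => sq_nonneg _) hh).symm
  refine summable_sq_and_tsum_sq_le_of_ofReal_abs_le (by positivity)
    (E := fun g => ∑' γ, Ψ γ * H (γ⁻¹ * g)) (fun g => ?_) ?_
  · refine (ENNReal.ofReal_abs_tsum_le _).trans (ENNReal.tsum_le_tsum fun γ => ?_)
    rw [← ENNReal.ofReal_mul (hψ γ)]
    exact ENNReal.ofReal_le_ofReal (ha g γ)
  · calc ∑' g, (∑' γ, Ψ γ * H (γ⁻¹ * g)) ^ 2 ≤ ENNReal.ofReal C ^ 2 * ∑' g, H g ^ 2 :=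
          ENNReal.tsum_conv_sq_le Ψ Φ H _ (fun g => (ENNReal.ofReal_pos.2 (hφ g)).ne')
            (fun g => ENNReal.ofReal_ne_top) (fun γ => by simp only [Ψ, hψinv]) hconv'
      _ = ENNReal.ofReal (C ^ 2 * ∑' g, h g ^ 2) := by
          rw [hH, ENNReal.ofReal_mul (by positivity), ENNReal.ofReal_pow hC]

theorem stmt18_general {G : Type*} [Group G]
    (ℓ : G → ℝ) (hℓpos : ∀ γ, 0 ≤ ℓ γ) (hℓinv : ∀ γ, ℓ γ⁻¹ = ℓ γ)
    (φ : G → ℝ) (hφpos : ∀ γ, 0 < φ γ) (hφinv : ∀ γ, φ γ⁻¹ = φ γ)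
    (t Ct : ℝ) (hCt : 0 < Ct)
    -- its symmetric variant
    (hconv₂ : ∀ γ' : G,
      Summable (fun γ : G => φ γ * φ (γ * γ') / (1 + ℓ γ) ^ t) ∧
      ∑' γ : G, φ γ * φ (γ * γ') / (1 + ℓ γ) ^ t ≤ Ct * φ γ')
    -- `h ∈ ℓ²(Γ)`
    (h : G → ℝ) (hh : Summable (fun g => h g ^ 2)) :
    (Summable (fun g : G =>
        (∑' γ : G, φ γ / (1 + ℓ γ) ^ t * |h (γ⁻¹ * g)|) ^ 2) ∧
      ∑' g : G, (∑' γ : G, φ γ / (1 + ℓ γ) ^ t * |h (γ⁻¹ * g)|) ^ 2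
        ≤ Ct ^ 2 * ∑' g : G, h g ^ 2) ∧
    ∀ f : G → ℝ, (∀ γ, |f γ| ≤ φ γ / (1 + ℓ γ) ^ t) →
      Summable (fun g : G => (∑' γ : G, f γ * h (γ⁻¹ * g)) ^ 2) ∧
      ∑' g : G, (∑' γ : G, f γ * h (γ⁻¹ * g)) ^ 2 ≤ Ct ^ 2 * ∑' g : G, h g ^ 2 := by
  set ψ : G → ℝ := fun γ => φ γ / (1 + ℓ γ) ^ t
  have hψ : ∀ γ, 0 ≤ ψ γ := fun γ =>
    div_nonneg (hφpos γ).le (Real.rpow_nonneg (by linarith [hℓpos γ]) t)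
  have hψinv : ∀ γ, ψ γ⁻¹ = ψ γ := fun γ => by simp only [ψ, hφinv, hℓinv]
  have hconv : ∀ g, Summable (fun γ => ψ γ * φ (γ * g)) ∧ ∑' γ, ψ γ * φ (γ * g) ≤ Ct * φ g := by
    simpa only [ψ, div_mul_eq_mul_div] using hconv₂
  have bound := summable_sq_and_tsum_sq_le_of_abs_le_conv hψ hψinv hφpos hCt.le hconv hh
  refine ⟨bound (fun g γ => ψ γ * |h (γ⁻¹ * g)|)
      fun g γ => (abs_of_nonneg (mul_nonneg (hψ γ) (abs_nonneg _))).le,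
    fun f hf => bound (fun g γ => f γ * h (γ⁻¹ * g)) fun g γ => ?_⟩
  rw [abs_mul]
  exact mul_le_mul_of_nonneg_right (hf γ) (abs_nonneg _)

/-- the Schwartz space acts boundedly on `ℓ²`: under the two
convolution estimates for `φ`,
`Σ_g (Σ_γ φ(γ)/(1+|γ|)^t |h(γ⁻¹g)|)² ≤ C_t² ‖h‖₂²`, hence `f * h ∈ ℓ²` with
`‖f * h‖₂ ≤ C_t ‖h‖₂` whenever `|f(γ)| ≤ φ(γ)/(1+|γ|)^t`. -/
theorem stmt18 {G : Type*} [Group G] [Countable G]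
    (ℓ : G → ℝ) (hℓpos : ∀ γ, 0 ≤ ℓ γ) (hℓinv : ∀ γ, ℓ γ⁻¹ = ℓ γ)
    (φ : G → ℝ) (hφpos : ∀ γ, 0 < φ γ) (hφinv : ∀ γ, φ γ⁻¹ = φ γ)
    (t Ct : ℝ) (hCt : 0 < Ct)
    -- convolution estimate for `φ`
    (hconv₁ : ∀ g : G,
      Summable (fun γ : G => φ (g * γ⁻¹) * φ γ / (1 + ℓ γ) ^ t) ∧
      ∑' γ : G, φ (g * γ⁻¹) * φ γ / (1 + ℓ γ) ^ t ≤ Ct * φ g)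
    -- its symmetric variant
    (hconv₂ : ∀ γ' : G,
      Summable (fun γ : G => φ γ * φ (γ * γ') / (1 + ℓ γ) ^ t) ∧
      ∑' γ : G, φ γ * φ (γ * γ') / (1 + ℓ γ) ^ t ≤ Ct * φ γ')
    -- `h ∈ ℓ²(Γ)`
    (h : G → ℝ) (hh : Summable (fun g => h g ^ 2)) :
    (Summable (fun g : G =>
        (∑' γ : G, φ γ / (1 + ℓ γ) ^ t * |h (γ⁻¹ * g)|) ^ 2) ∧
      ∑' g : G, (∑' γ : G, φ γ / (1 + ℓ γ) ^ t * |h (γ⁻¹ * g)|) ^ 2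
        ≤ Ct ^ 2 * ∑' g : G, h g ^ 2) ∧
    ∀ f : G → ℝ, (∀ γ, |f γ| ≤ φ γ / (1 + ℓ γ) ^ t) →
      Summable (fun g : G => (∑' γ : G, f γ * h (γ⁻¹ * g)) ^ 2) ∧
      ∑' g : G, (∑' γ : G, f γ * h (γ⁻¹ * g)) ^ 2 ≤ Ct ^ 2 * ∑' g : G, h g ^ 2 :=
  stmt18_general ℓ hℓpos hℓinv φ hφpos hφinv t Ct hCt hconv₂ h hh
end
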